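/- arXiv:1602.03552 — 3 statements merged into one kernel-verified Lean document; each statement's English description precedes it below -/
import Mathlib

section
/- Let l : ℝ → ℝ be differentiable with derivative l' that is c-Lipschitz. Define R(w) = (1/N) Σ_{i=1}^N [α_i l(⟨w,x_i⟩) + (1−α_i) l(−⟨w,x_i⟩)] + (λ/2)‖w‖², where α_i ∈ [0,1], ‖x_i‖ ≤ 1, and λ > 0. Then ∇R is (c+λ)-Lipschitz, i.e., ‖∇R(v) − ∇R(u)‖ ≤ (c+λ)‖v−u‖ for all u, v ∈ ℝ^d. -/
/-!
The gradient of the risk is `∇R(w) = (1/N) ∑ᵢ ψᵢ(⟪w, xᵢ⟫) xᵢ + λ w` with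
`ψᵢ(s) = αᵢ l'(s) - (1 - αᵢ) l'(-s)`. Each `ψᵢ` is `c`-Lipschitz, being a convex combination of
`c`-Lipschitz functions, so by Cauchy–Schwarz the `i`-th term is `c ‖xᵢ‖²`-Lipschitz, hence
`c`-Lipschitz. An average of `c`-Lipschitz maps is `c`-Lipschitz and `λ w` is `λ`-Lipschitz.
-/

open scoped InnerProductSpace
open InnerProductSpace Finset

section InnerProductSpace

variable {E : Type*} [NormedAddCommGroup E] [InnerProductSpace ℝ E]

theorem norm_smul_inner_sub_smul_inner_le {ψ : ℝ → ℝ} {c : ℝ} (hc : 0 ≤ c)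
    (hψ : ∀ s t, |ψ s - ψ t| ≤ c * |s - t|) (a u v : E) :
    ‖ψ ⟪v, a⟫_ℝ • a - ψ ⟪u, a⟫_ℝ • a‖ ≤ c * ‖a‖ ^ 2 * ‖v - u‖ := by
  calc ‖ψ ⟪v, a⟫_ℝ • a - ψ ⟪u, a⟫_ℝ • a‖ = |ψ ⟪v, a⟫_ℝ - ψ ⟪u, a⟫_ℝ| * ‖a‖ := by
        rw [← sub_smul, norm_smul, Real.norm_eq_abs]
    _ ≤ c * |⟪v - u, a⟫_ℝ| * ‖a‖ := by
        rw [inner_sub_left]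
        gcongr
        exact hψ _ _
    _ ≤ c * (‖v - u‖ * ‖a‖) * ‖a‖ := by gcongr; exact abs_real_inner_le_norm _ _
    _ = c * ‖a‖ ^ 2 * ‖v - u‖ := by ring

variable [CompleteSpace E]

theorem HasGradientAt.add {f g : E → ℝ} {f' g' z : E} (hf : HasGradientAt f f' z)
    (hg : HasGradientAt g g' z) : HasGradientAt (fun w => f w + g w) (f' + g') z := by
  rw [hasGradientAt_iff_hasFDerivAt, map_add]
  exact HasFDerivAt.add hf hg

theorem HasGradientAt.const_mul {f : E → ℝ} {f' z : E} (a : ℝ) (hf : HasGradientAt f f' z) :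
    HasGradientAt (fun w => a * f w) (a • f') z := by
  rw [hasGradientAt_iff_hasFDerivAt, map_smulₛₗ, RCLike.conj_to_real]
  exact HasFDerivAt.const_mul hf a

theorem HasGradientAt.fun_sum {ι : Type*} {s : Finset ι} {f : ι → E → ℝ} {f' : ι → E} {z : E}
    (hf : ∀ i ∈ s, HasGradientAt (f i) (f' i) z) :
    HasGradientAt (fun w => ∑ i ∈ s, f i w) (∑ i ∈ s, f' i) z := by
  rw [hasGradientAt_iff_hasFDerivAt, map_sum]
  exact HasFDerivAt.fun_sum hf

theorem hasGradientAt_inner_left (a z : E) : HasGradientAt (fun w => ⟪w, a⟫_ℝ) a z := by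
  have h : (fun w => ⟪w, a⟫_ℝ) = toDual ℝ E a := funext fun w => real_inner_comm a w
  rw [hasGradientAt_iff_hasFDerivAt, h]
  exact (toDual ℝ E a).hasFDerivAt

theorem HasDerivAt.comp_hasGradientAt {g : ℝ → ℝ} {g' : ℝ} {f : E → ℝ} {f' z : E}
    (hg : HasDerivAt g g' (f z)) (hf : HasGradientAt f f' z) :
    HasGradientAt (fun w => g (f w)) (g' • f') z := by
  rw [hasGradientAt_iff_hasFDerivAt, map_smulₛₗ, RCLike.conj_to_real]
  exact hg.comp_hasFDerivAt z hf

theorem hasGradientAt_norm_sq (z : E) : HasGradientAt (fun w => ‖w‖ ^ 2) ((2 : ℝ) • z) z := by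
  rw [hasGradientAt_iff_hasFDerivAt, map_smulₛₗ, RCLike.conj_to_real]
  refine (hasStrictFDerivAt_norm_sq z).hasFDerivAt.congr_fderiv ?_
  ext w
  simp [two_smul]

theorem hasGradientAt_regularizedRisk {ι : Type*} (s : Finset ι) {φ φ' : ι → ℝ → ℝ}
    (hφ : ∀ i t, HasDerivAt (φ i) (φ' i t) t) (x : ι → E) (κ lam : ℝ) (z : E) :
    HasGradientAt (fun w => κ * ∑ i ∈ s, φ i ⟪w, x i⟫_ℝ + lam / 2 * ‖w‖ ^ 2)
      (κ • ∑ i ∈ s, φ' i ⟪z, x i⟫_ℝ • x i + lam • z) z := by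
  have hloss := HasGradientAt.fun_sum fun i (_ : i ∈ s) =>
    (hφ i _).comp_hasGradientAt (hasGradientAt_inner_left (x i) z)
  convert (hloss.const_mul κ).add ((hasGradientAt_norm_sq z).const_mul (lam / 2)) using 2
  rw [smul_smul, div_mul_cancel₀ _ two_ne_zero]

end InnerProductSpace

theorem norm_one_div_smul_sum_le {F : Type*} [SeminormedAddCommGroup F] [NormedSpace ℝ F] {N : ℕ}
    {f : Fin N → F} {r : ℝ} (hr : 0 ≤ r) (hf : ∀ i, ‖f i‖ ≤ r) :
    ‖(1 / N : ℝ) • ∑ i, f i‖ ≤ r := by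
  rcases N.eq_zero_or_pos with rfl | hN
  · simpa using hr
  calc ‖(1 / N : ℝ) • ∑ i, f i‖ ≤ (1 / N) * ∑ _i : Fin N, r := by
        rw [norm_smul, Real.norm_of_nonneg (by positivity)]
        gcongr
        exact (norm_sum_le _ _).trans (sum_le_sum fun i _ => hf i)
    _ = r := by field_simp; simp

theorem hasDerivAt_mixedLoss {l : ℝ → ℝ} (hl : Differentiable ℝ l) (a s : ℝ) :
    HasDerivAt (fun t => a * l t + (1 - a) * l (-t)) (a * deriv l s - (1 - a) * deriv l (-s)) s := by
  have hneg : HasDerivAt (fun t => l (-t)) (deriv l (-s) * -1) s :=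
    (hl (-s)).hasDerivAt.comp s (hasDerivAt_neg s)
  exact (((hl s).hasDerivAt.const_mul a).add (hneg.const_mul (1 - a))).congr_deriv (by ring)

theorem abs_mixedLoss_deriv_sub_le {g : ℝ → ℝ} {c a : ℝ} (hg : ∀ s t, |g s - g t| ≤ c * |s - t|)
    (ha : a ∈ Set.Icc 0 1) (s t : ℝ) :
    |(a * g s - (1 - a) * g (-s)) - (a * g t - (1 - a) * g (-t))| ≤ c * |s - t| := by
  obtain ⟨ha₀, ha₁⟩ := ha
  have hneg : |g (-s) - g (-t)| ≤ c * |s - t| := by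
    simpa only [neg_sub_neg, abs_sub_comm t s] using hg (-s) (-t)
  calc |(a * g s - (1 - a) * g (-s)) - (a * g t - (1 - a) * g (-t))|
      = |a * (g s - g t) - (1 - a) * (g (-s) - g (-t))| := by ring_nf
    _ ≤ a * |g s - g t| + (1 - a) * |g (-s) - g (-t)| := by
        refine (abs_sub _ _).trans_eq ?_
        rw [abs_mul, abs_mul, abs_of_nonneg ha₀, abs_of_nonneg (sub_nonneg.2 ha₁)]
    _ ≤ a * (c * |s - t|) + (1 - a) * (c * |s - t|) := by
        gcongr
        exact hg s t
    _ = c * |s - t| := by ring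

theorem stmt4_general {d N : ℕ} (l : ℝ → ℝ) (hl : Differentiable ℝ l)
    (c lam : ℝ) (hc : 0 ≤ c) (hlam : 0 < lam)
    (hlip : ∀ s t : ℝ, |deriv l s - deriv l t| ≤ c * |s - t|)
    (x : Fin N → EuclideanSpace ℝ (Fin d)) (hx : ∀ i, ‖x i‖ ≤ 1)
    (α : Fin N → ℝ) (hα : ∀ i, α i ∈ Set.Icc (0 : ℝ) 1)
    (u v : EuclideanSpace ℝ (Fin d)) :
    ‖gradient (fun z : EuclideanSpace ℝ (Fin d) =>
        (1 / N : ℝ) * ∑ i, (α i * l ⟪z, x i⟫_ℝ + (1 - α i) * l (-⟪z, x i⟫_ℝ)) +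
          lam / 2 * ‖z‖ ^ 2) v -
      gradient (fun z : EuclideanSpace ℝ (Fin d) =>
        (1 / N : ℝ) * ∑ i, (α i * l ⟪z, x i⟫_ℝ + (1 - α i) * l (-⟪z, x i⟫_ℝ)) +
          lam / 2 * ‖z‖ ^ 2) u‖ ≤ (c + lam) * ‖v - u‖ := by
  set ψ : Fin N → ℝ → ℝ := fun i s => α i * deriv l s - (1 - α i) * deriv l (-s)
  have hR := hasGradientAt_regularizedRisk univ (φ' := ψ) (fun i => hasDerivAt_mixedLoss hl (α i))
    x (1 / N) lam
  have hψ (i : Fin N) : ‖ψ i ⟪v, x i⟫_ℝ • x i - ψ i ⟪u, x i⟫_ℝ • x i‖ ≤ c * ‖v - u‖ := by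
    have hxi : ‖x i‖ ^ 2 ≤ 1 := pow_le_one₀ (norm_nonneg _) (hx i)
    exact (norm_smul_inner_sub_smul_inner_le hc (abs_mixedLoss_deriv_sub_le hlip (hα i)) _ _ _).trans
      (mul_le_mul_of_nonneg_right (mul_le_of_le_one_right hc hxi) (norm_nonneg _))
  rw [(hR v).gradient, (hR u).gradient]
  calc _ = ‖(1 / N : ℝ) • ∑ i, (ψ i ⟪v, x i⟫_ℝ • x i - ψ i ⟪u, x i⟫_ℝ • x i) + lam • (v - u)‖ := by
        rw [sum_sub_distrib, smul_sub, smul_sub]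
        abel_nf
    _ ≤ c * ‖v - u‖ + lam * ‖v - u‖ := by
        refine (norm_add_le _ _).trans (add_le_add ?_ ?_)
        · exact norm_one_div_smul_sum_le (by positivity) hψ
        · rw [norm_smul, Real.norm_of_nonneg hlam.le]
    _ = (c + lam) * ‖v - u‖ := by ring

theorem stmt4 {d N : ℕ} (hN : 0 < N) (l : ℝ → ℝ) (hl : Differentiable ℝ l)
    (c lam : ℝ) (hc : 0 ≤ c) (hlam : 0 < lam)
    (hlip : ∀ s t : ℝ, |deriv l s - deriv l t| ≤ c * |s - t|)
    (x : Fin N → EuclideanSpace ℝ (Fin d)) (hx : ∀ i, ‖x i‖ ≤ 1)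
    (α : Fin N → ℝ) (hα : ∀ i, α i ∈ Set.Icc (0 : ℝ) 1)
    (u v : EuclideanSpace ℝ (Fin d)) :
    ‖gradient (fun z : EuclideanSpace ℝ (Fin d) =>
        (1 / N : ℝ) * ∑ i, (α i * l ⟪z, x i⟫_ℝ + (1 - α i) * l (-⟪z, x i⟫_ℝ)) +
          lam / 2 * ‖z‖ ^ 2) v -
      gradient (fun z : EuclideanSpace ℝ (Fin d) =>
        (1 / N : ℝ) * ∑ i, (α i * l ⟪z, x i⟫_ℝ + (1 - α i) * l (-⟪z, x i⟫_ℝ)) +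
          lam / 2 * ‖z‖ ^ 2) u‖ ≤ (c + lam) * ‖v - u‖ :=
  stmt4_general l hl c lam hc hlam hlip x hx α hα u v
end

section
/- Let X be a real random variable with Gamma distribution of integer shape parameter k ≥ 1 and scale parameter θ > 0. Then for every δ ∈ (0,1), P(X > kθ log(k/δ)) ≤ δ. -/
/-!
For integer shape `k` and rate `r`, the Gamma tail is a Poisson sum:
`P(X > a) = exp (-r a) * ∑_{i < k} (r a)^i / i!`, since the right-hand side is an antiderivative
of minus the density. With `r a = k t` and `t = log (k / δ)`, each of the `k` terms is at most
`exp (-t) = δ / k`. That term bound is `(k t)^i exp (-(k - 1) t) ≤ i!` for `i < k`, which follows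
from `y^i exp (-y) ≤ i^i exp (-i)` (the maximum at `y = i`) and `(i + 1)^i ≤ i! exp i`.
-/

open MeasureTheory ProbabilityTheory Real Finset Filter Topology
open scoped Nat

lemma pow_mul_exp_neg_le (n : ℕ) {x : ℝ} (hx : 0 ≤ x) :
    x ^ n * exp (-x) ≤ n ^ n * exp (-n) := by
  rcases eq_or_ne n 0 with rfl | hn
  · simpa using hx
  have h : x / n ≤ exp (x / n - 1) := by linarith [add_one_le_exp (x / n - 1)]
  calc x ^ n * exp (-x) = n ^ n * ((x / n) ^ n * exp (-x)) := by
        rw [← mul_assoc, ← mul_pow, mul_div_cancel₀ _ (Nat.cast_ne_zero.mpr hn)]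
    _ ≤ n ^ n * (exp (x / n - 1) ^ n * exp (-x)) := by gcongr
    _ = n ^ n * exp (-n) := by
      rw [← exp_nat_mul, ← exp_add]; congr 2; field_simp; ring

lemma add_one_pow_le_factorial_mul_exp (n : ℕ) : ((n : ℝ) + 1) ^ n ≤ n ! * exp n := by
  induction n with
  | zero => simp
  | succ n ih =>
    have h := one_add_inv_pow_le_exp (n := n + 1)
    push_cast at h ⊢
    calc ((n : ℝ) + 1 + 1) ^ (n + 1)
        = (1 + ((n : ℝ) + 1)⁻¹) ^ (n + 1) * ((n + 1) * (n + 1) ^ n) := by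
          rw [← pow_succ' ((n : ℝ) + 1) n, ← mul_pow]; congr 1; field_simp
      _ ≤ exp 1 * ((n + 1) * (n ! * exp n)) := by gcongr
      _ = (n + 1)! * exp (n + 1) := by
          rw [Nat.factorial_succ, exp_add]; push_cast; ring

lemma pow_mul_exp_neg_le_factorial {i k : ℕ} (hik : i < k) {t : ℝ} (ht : 0 ≤ t) :
    (k * t) ^ i * exp (-((k - 1) * t)) ≤ i ! := by
  have hik' : (i : ℝ) + 1 ≤ k := by exact_mod_cast hik
  have hx : 0 ≤ ((k : ℝ) - 1) * t := mul_nonneg (by linarith) ht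
  have hkt : i * (k * t) ≤ (i + 1) * ((k - 1) * t) := by nlinarith
  -- multiplying by `i ^ i` rather than dividing by `i` also covers `i = 0`, as `0 ^ 0 = 1`
  refine le_of_mul_le_mul_left ?_ (by exact_mod_cast Nat.pow_self_pos : (0 : ℝ) < (i : ℝ) ^ i)
  calc (i : ℝ) ^ i * ((k * t) ^ i * exp (-((k - 1) * t)))
      = (i * (k * t)) ^ i * exp (-((k - 1) * t)) := by ring
    _ ≤ ((i + 1) * ((k - 1) * t)) ^ i * exp (-((k - 1) * t)) := by
        gcongr ?_ ^ i * _
    _ = (i + 1) ^ i * (((k - 1) * t) ^ i * exp (-((k - 1) * t))) := by rw [mul_pow]; ring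
    _ ≤ (i + 1) ^ i * (i ^ i * exp (-i)) := by
        gcongr (i + 1) ^ i * ?_; exact pow_mul_exp_neg_le i hx
    _ = i ^ i * ((i + 1) ^ i * exp (-i)) := by ring
    _ ≤ i ^ i * (i ! * exp i * exp (-i)) := by
        gcongr i ^ i * (?_ * _); exact add_one_pow_le_factorial_mul_exp i
    _ = i ^ i * i ! := by rw [mul_assoc, ← exp_add, add_neg_cancel, exp_zero, mul_one]

lemma exp_neg_mul_sum_pow_div_factorial_le (k : ℕ) {t : ℝ} (ht : 0 ≤ t) :
    exp (-(k * t)) * ∑ i ∈ range k, (k * t) ^ i / i ! ≤ k * exp (-t) := by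
  rw [mul_sum]
  calc ∑ i ∈ range k, exp (-(k * t)) * ((k * t) ^ i / i !)
      = ∑ i ∈ range k, (k * t) ^ i * exp (-((k - 1) * t)) / i ! * exp (-t) := by
        refine sum_congr rfl fun i _ ↦ ?_
        rw [show -((k : ℝ) * t) = -((k - 1) * t) + -t by ring, exp_add]; ring
    _ ≤ ∑ _i ∈ range k, exp (-t) := by
        refine sum_le_sum fun i hi ↦ ?_
        have hterm := pow_mul_exp_neg_le_factorial (mem_range.mp hi) ht
        exact mul_le_of_le_one_left (exp_pos _).le ((div_le_one (by positivity)).mpr hterm)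
    _ = k * exp (-t) := by rw [sum_const, card_range, nsmul_eq_mul]

lemma hasDerivAt_exp_neg_mul_sum_pow_div_factorial (m : ℕ) (u : ℝ) :
    HasDerivAt (fun u : ℝ ↦ exp (-u) * ∑ i ∈ range (m + 1), u ^ i / i !)
      (-(exp (-u) * u ^ m / m !)) u := by
  have hsum : HasDerivAt (fun u : ℝ ↦ ∑ i ∈ range (m + 1), u ^ i / i !)
      (∑ i ∈ range m, u ^ i / i !) u := by
    refine (HasDerivAt.fun_sum fun i (_ : i ∈ range (m + 1)) ↦
      (hasDerivAt_pow i u).div_const (i ! : ℝ)).congr_deriv ?_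
    rw [sum_range_succ']
    simp only [CharP.cast_eq_zero, zero_mul, zero_div, add_zero, Nat.add_sub_cancel]
    refine sum_congr rfl fun i _ ↦ ?_
    rw [Nat.factorial_succ]; push_cast; field_simp
  refine ((hasDerivAt_neg u).exp.mul hsum).congr_deriv ?_
  rw [sum_range_succ]; ring

lemma tendsto_exp_neg_mul_sum_pow_div_factorial (n : ℕ) :
    Tendsto (fun u : ℝ ↦ exp (-u) * ∑ i ∈ range n, u ^ i / i !) atTop (𝓝 0) := by
  simp_rw [mul_sum]
  rw [← sum_const_zero (s := range n)]
  refine tendsto_finsetSum _ fun i _ ↦ ?_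
  simpa using ((tendsto_pow_mul_exp_neg_atTop_nhds_zero i).div_const (i ! : ℝ)).congr
    fun u ↦ by ring

lemma gammaPDFReal_natCast_add_one (m : ℕ) (r : ℝ) {x : ℝ} (hx : 0 ≤ x) :
    gammaPDFReal (m + 1) r x = r * (exp (-(r * x)) * (r * x) ^ m / m !) := by
  rw [gammaPDFReal, if_pos hx, add_sub_cancel_right, rpow_natCast, Gamma_nat_eq_factorial,
    ← Nat.cast_add_one, rpow_natCast, mul_pow, pow_succ]
  ring

lemma gammaMeasure_natCast_Ioi (n : ℕ) {r a : ℝ} (hr : 0 < r) (ha : 0 ≤ a) :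
    gammaMeasure n r (Set.Ioi a) =
      ENNReal.ofReal (exp (-(r * a)) * ∑ i ∈ range n, (r * a) ^ i / i !) := by
  cases n with
  | zero => simp [gammaMeasure, gammaPDF, gammaPDFReal]
  | succ m =>
    set F : ℝ → ℝ := fun x ↦ -(exp (-(r * x)) * ∑ i ∈ range (m + 1), (r * x) ^ i / i !)
    have hderiv : ∀ x ∈ Set.Ici a, HasDerivAt F (gammaPDFReal (m + 1) r x) x := by
      intro x hx
      rw [gammaPDFReal_natCast_add_one m r (ha.trans hx)]
      exact ((hasDerivAt_exp_neg_mul_sum_pow_div_factorial m (r * x)).comp x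
        ((hasDerivAt_id x).const_mul r)).neg.congr_deriv (by ring)
    have hpos : ∀ x ∈ Set.Ioi a, 0 ≤ gammaPDFReal (m + 1) r x :=
      fun x _ ↦ gammaPDFReal_nonneg (by positivity) hr x
    have hlim : Tendsto F atTop (𝓝 0) := by
      simpa using ((tendsto_exp_neg_mul_sum_pow_div_factorial (m + 1)).comp
        (tendsto_id.const_mul_atTop hr)).neg
    calc gammaMeasure (m + 1 : ℕ) r (Set.Ioi a)
        = ∫⁻ x in Set.Ioi a, ENNReal.ofReal (gammaPDFReal (m + 1) r x) := by
          rw [gammaMeasure, withDensity_apply _ measurableSet_Ioi, Nat.cast_add_one]; rfl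
      _ = ENNReal.ofReal (∫ x in Set.Ioi a, gammaPDFReal (m + 1) r x) :=
          (ofReal_integral_eq_lintegral_ofReal (integrableOn_Ioi_deriv_of_nonneg' hderiv hpos hlim)
            (ae_restrict_of_forall_mem measurableSet_Ioi hpos)).symm
      _ = _ := by rw [integral_Ioi_of_hasDerivAt_of_nonneg' hderiv hpos hlim]; simp [F]

theorem stmt7_general {Ω : Type*} [MeasurableSpace Ω] (μ : Measure Ω)
    (k : ℕ) (hk : 1 ≤ k) (θ : ℝ) (hθ : 0 < θ)
    (X : Ω → ℝ) (hX : Measurable X)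
    (hlaw : μ.map X = gammaMeasure k (1 / θ))
    (δ : ℝ) (hδ : δ ∈ Set.Ioo (0 : ℝ) 1) :
    μ {ω | k * θ * Real.log (k / δ) < X ω} ≤ ENNReal.ofReal δ := by
  obtain ⟨hδ0, hδ1⟩ := hδ
  have hk' : (1 : ℝ) ≤ k := by exact_mod_cast hk
  set t := log (k / δ)
  have ht : 0 ≤ t := log_nonneg (by rw [le_div_iff₀ hδ0]; linarith)
  have hδt : k * exp (-t) = δ := by
    rw [exp_neg, exp_log (by positivity), inv_div]; field_simp
  have hrate : 1 / θ * (k * θ * t) = k * t := by field_simp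
  calc μ {ω | k * θ * t < X ω} = μ.map X (Set.Ioi (k * θ * t)) :=
        (Measure.map_apply hX measurableSet_Ioi).symm
    _ = ENNReal.ofReal (exp (-(k * t)) * ∑ i ∈ range k, (k * t) ^ i / i !) := by
        rw [hlaw, gammaMeasure_natCast_Ioi k (by positivity) (by positivity), hrate]
    _ ≤ ENNReal.ofReal δ := by
        rw [← hδt]; exact ENNReal.ofReal_le_ofReal (exp_neg_mul_sum_pow_div_factorial_le k ht)

theorem stmt7 {Ω : Type*} [MeasurableSpace Ω] (μ : Measure Ω) [IsProbabilityMeasure μ]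
    (k : ℕ) (hk : 1 ≤ k) (θ : ℝ) (hθ : 0 < θ)
    (X : Ω → ℝ) (hX : Measurable X)
    (hlaw : μ.map X = gammaMeasure k (1 / θ))
    (δ : ℝ) (hδ : δ ∈ Set.Ioo (0 : ℝ) 1) :
    μ {ω | k * θ * Real.log (k / δ) < X ω} ≤ ENNReal.ofReal δ :=
  stmt7_general μ k hk θ hθ X hX hlaw δ hδ
end

section
/- Let λ > 0 and let F, G : ℝ^d → ℝ be differentiable, with F λ-strongly convex and G λ-strongly convex, and assume g = F − G is differentiable with ‖∇g(w)‖ ≤ B for all w. If w_F minimizes F and w_G minimizes G, then ‖w_F − w_G‖ ≤ B/λ. -/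
/-!
Strong convexity makes `∇F` strongly monotone, and `∇F w_F = 0`, so
`λ ‖w_G - w_F‖² ≤ ⟪∇F w_G, w_G - w_F⟫ ≤ ‖∇F w_G‖ ‖w_G - w_F‖`.
At the critical point `w_G` of `G` we have `∇F w_G = ∇(F - G) w_G`, whose norm is at most `B`.
-/

open Set InnerProductSpace

section NormedSpace

variable {E : Type*} [NormedAddCommGroup E] [NormedSpace ℝ E] {f : E → ℝ}

/-- Restricted to the segment `t ↦ lineMap x y t`, `f` is a convex function of one real variable,
whose derivative is monotone: compare it at `t = 0` and `t = 1`. -/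
theorem ConvexOn.fderiv_apply_sub_le_fderiv_apply_sub (hf : ConvexOn ℝ univ f)
    (hfd : Differentiable ℝ f) (x y : E) :
    fderiv ℝ f x (y - x) ≤ fderiv ℝ f y (y - x) := by
  set ℓ : ℝ →ᵃ[ℝ] E := AffineMap.lineMap x y with hℓ
  have hline : ConvexOn ℝ univ (f ∘ ℓ) := by
    simpa only [preimage_univ] using hf.comp_affineMap ℓ
  have hderiv (t : ℝ) : HasDerivAt (f ∘ ℓ) (fderiv ℝ f (ℓ t) (y - x)) t :=
    (hfd _).hasFDerivAt.comp_hasDerivAt t AffineMap.hasDerivAt_lineMap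
  have h01 := (hline.le_slope_of_hasDerivAt (mem_univ 0) (mem_univ 1) one_pos (hderiv 0)).trans
    (hline.slope_le_of_hasDerivAt (mem_univ 0) (mem_univ 1) one_pos (hderiv 1))
  simpa only [hℓ, AffineMap.lineMap_apply_zero, AffineMap.lineMap_apply_one] using h01

end NormedSpace

section InnerProductSpace

variable {E : Type*} [NormedAddCommGroup E] [InnerProductSpace ℝ E] {f : E → ℝ} {m : ℝ}

/-- Apply the convex case to `f - m/2 ‖·‖²`, whose derivative at `x` is `fderiv f x - m ⟪x, ·⟫`. -/
theorem StrongConvexOn.mul_norm_sub_sq_le_fderiv_sub (hf : StrongConvexOn univ m f)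
    (hfd : Differentiable ℝ f) (x y : E) :
    m * ‖y - x‖ ^ 2 ≤ fderiv ℝ f y (y - x) - fderiv ℝ f x (y - x) := by
  have hderiv (w : E) : HasFDerivAt (fun w => f w - m / 2 * ‖w‖ ^ 2)
      (fderiv ℝ f w - (m / 2) • (2 • innerSL ℝ w)) w :=
    (hfd w).hasFDerivAt.sub ((hasStrictFDerivAt_norm_sq w).hasFDerivAt.const_mul (m / 2))
  have hmono := (strongConvexOn_iff_convex.mp hf).fderiv_apply_sub_le_fderiv_apply_sub
    (fun w => (hderiv w).differentiableAt) x y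
  rw [(hderiv x).fderiv, (hderiv y).fderiv] at hmono
  have hinner : ⟪y, y - x⟫_ℝ - ⟪x, y - x⟫_ℝ = ‖y - x‖ ^ 2 := by
    rw [← inner_sub_left, real_inner_self_eq_norm_sq]
  simp only [sub_apply, smul_apply, innerSL_apply_apply, smul_eq_mul, nsmul_eq_mul,
    Nat.cast_ofNat] at hmono
  linear_combination hmono - m * hinner

theorem StrongConvexOn.mul_norm_sub_le_norm_gradient [CompleteSpace E]
    (hf : StrongConvexOn univ m f) (hfd : Differentiable ℝ f) {x : E} (hx : IsLocalMin f x)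
    (y : E) : m * ‖y - x‖ ≤ ‖gradient f y‖ := by
  have hmono := hf.mul_norm_sub_sq_le_fderiv_sub hfd x y
  rw [hx.fderiv_eq_zero, zero_apply, sub_zero, ← toDual_gradient, toDual_apply_apply] at hmono
  have hcs := hmono.trans (real_inner_le_norm (gradient f y) (y - x))
  rcases (norm_nonneg (y - x)).eq_or_lt with hxy | hxy
  · rw [← hxy, mul_zero]
    exact norm_nonneg _
  · nlinarith

end InnerProductSpace

theorem stmt16_general {d : ℕ} (lam B : ℝ) (hlam : 0 < lam)
    (F G : EuclideanSpace ℝ (Fin d) → ℝ)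
    (hF : Differentiable ℝ F) (hG : Differentiable ℝ G)
    (hFc : StrongConvexOn Set.univ lam F)
    (hB : ∀ w, ‖gradient (fun u => F u - G u) w‖ ≤ B)
    (wF wG : EuclideanSpace ℝ (Fin d))
    (hwF : ∀ w, F wF ≤ F w) (hwG : ∀ w, G wG ≤ G w) :
    ‖wF - wG‖ ≤ B / lam := by
  have hGcrit : fderiv ℝ G wG = 0 := IsLocalMin.fderiv_eq_zero (.of_forall hwG)
  have hgrad : gradient (fun u => F u - G u) wG = gradient F wG := by
    rw [gradient, gradient, fderiv_fun_sub (hF wG) (hG wG), hGcrit, sub_zero]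
  rw [le_div_iff₀' hlam, norm_sub_rev]
  calc lam * ‖wG - wF‖ ≤ ‖gradient F wG‖ :=
        hFc.mul_norm_sub_le_norm_gradient hF (.of_forall hwF) wG
    _ ≤ B := hgrad ▸ hB wG

theorem stmt16 {d : ℕ} (lam B : ℝ) (hlam : 0 < lam)
    (F G : EuclideanSpace ℝ (Fin d) → ℝ)
    (hF : Differentiable ℝ F) (hG : Differentiable ℝ G)
    (hFc : StrongConvexOn Set.univ lam F) (hGc : StrongConvexOn Set.univ lam G)
    (hB : ∀ w, ‖gradient (fun u => F u - G u) w‖ ≤ B)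
    (wF wG : EuclideanSpace ℝ (Fin d))
    (hwF : ∀ w, F wF ≤ F w) (hwG : ∀ w, G wG ≤ G w) :
    ‖wF - wG‖ ≤ B / lam :=
  stmt16_general lam B hlam F G hF hG hFc hB wF wG hwF hwG
end
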